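/- Fix an integer k ≥ 1 and a constant C₀ < ∞. There exists C < ∞ such that for every λ ∈ (0,1) and all real numbers c₁, c₂ with |c₁ − λ^{−1/2}| ≤ C₀ and |c₂ − λ^{−1/2}| ≤ C₀, one has |(1 − γ^k)/(λ + 1 − γ) + ½ (c₁ (1 − γ^k) + c₂ (1 − γ^{−k}))| ≤ C, where γ = ((λ+2) − √(λ² + 4λ))/2. -/

import Mathlib

/-!
With `s = √λ`, the root `γ` satisfies `(1 - γ)² = λγ`, so `1 - γ ≤ s`, and `γ⁻¹ ≤ λ + 2 < 3`
since `γ⁻¹` is the other root. Bernoulli's inequality then gives `|1 - γᵏ| ≤ k s` and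
`|1 - γ⁻ᵏ| ≤ 3ᵏ k s`, while `cᵢ = O(1/s)`; so both products `cᵢ(1 - γ^{±k})` are `O(1)`.
The first term is at most `k`, because `1 - γᵏ ≤ k (1 - γ) ≤ k (λ + 1 - γ)`.
-/

open Real

/-- `γ = ((λ+2) - √(λ²+4λ))/2`. -/
noncomputable def gam (lam : ℝ) : ℝ :=
  ((lam + 2) - Real.sqrt (lam ^ 2 + 4 * lam)) / 2

lemma one_sub_pow_le_mul_one_sub {x : ℝ} (hx : -1 ≤ x) (n : ℕ) : 1 - x ^ n ≤ n * (1 - x) := by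
  linarith [one_add_mul_sub_le_pow hx n]

lemma abs_mul_le_of_abs_sub_inv_le {c s x C₀ M : ℝ} (hs : 0 < s) (hs₁ : s ≤ 1)
    (hc : |c - s⁻¹| ≤ C₀) (hx : |x| ≤ M * s) : |c * x| ≤ M * (C₀ + 1) := by
  have hC₀ : 0 ≤ C₀ := (abs_nonneg _).trans hc
  have hM : 0 ≤ M := nonneg_of_mul_nonneg_left ((abs_nonneg _).trans hx) hs
  have hc' : |c| ≤ C₀ + s⁻¹ := by
    have := abs_sub_abs_le_abs_sub c s⁻¹
    rw [abs_of_pos (inv_pos.2 hs)] at this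
    linarith
  calc |c * x| = |c| * |x| := abs_mul c x
    _ ≤ (C₀ + s⁻¹) * (M * s) := mul_le_mul hc' hx (abs_nonneg _) (by positivity)
    _ = M * (C₀ * s + 1) := by field_simp
    _ ≤ M * (C₀ + 1) := by gcongr; exact mul_le_of_le_one_right hC₀ hs₁

section gam

variable {lam : ℝ}

lemma sqrt_sq_add_four_mul_lt (h : 0 ≤ lam) : √(lam ^ 2 + 4 * lam) < lam + 2 := by
  rw [sqrt_lt' (by linarith)]
  linarith

lemma le_sqrt_sq_add_four_mul (h : 0 ≤ lam) : lam ≤ √(lam ^ 2 + 4 * lam) :=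
  le_sqrt_of_sq_le (by linarith)

lemma gam_pos (h : 0 ≤ lam) : 0 < gam lam := by
  unfold gam
  linarith [sqrt_sq_add_four_mul_lt h]

lemma gam_le_one (h : 0 ≤ lam) : gam lam ≤ 1 := by
  unfold gam
  linarith [le_sqrt_sq_add_four_mul h]

lemma gam_mul_other_root (h : 0 ≤ lam) :
    gam lam * (((lam + 2) + √(lam ^ 2 + 4 * lam)) / 2) = 1 := by
  have hD := sq_sqrt (show 0 ≤ lam ^ 2 + 4 * lam by positivity)
  unfold gam
  linear_combination (-1 / 4 : ℝ) * hD

lemma inv_gam_le (h : 0 ≤ lam) : (gam lam)⁻¹ ≤ lam + 2 := by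
  rw [inv_eq_of_mul_eq_one_right (gam_mul_other_root h)]
  linarith [sqrt_sq_add_four_mul_lt h]

lemma one_sub_gam_sq (h : 0 ≤ lam) : (1 - gam lam) ^ 2 = lam * gam lam := by
  have hD := sq_sqrt (show 0 ≤ lam ^ 2 + 4 * lam by positivity)
  unfold gam
  linear_combination (1 / 4 : ℝ) * hD

lemma one_sub_gam_le_sqrt (h : 0 ≤ lam) : 1 - gam lam ≤ √lam := by
  apply le_sqrt_of_sq_le
  rw [one_sub_gam_sq h]
  exact mul_le_of_le_one_right h (gam_le_one h)

lemma abs_one_sub_gam_pow_le (h : 0 ≤ lam) (k : ℕ) : |1 - gam lam ^ k| ≤ k * √lam := by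
  have hγ := gam_pos h
  rw [abs_of_nonneg (sub_nonneg.2 (pow_le_one₀ hγ.le (gam_le_one h)))]
  calc 1 - gam lam ^ k ≤ k * (1 - gam lam) := one_sub_pow_le_mul_one_sub (by linarith) k
    _ ≤ k * √lam := by gcongr; exact one_sub_gam_le_sqrt h

lemma abs_one_sub_gam_zpow_neg_le (h : 0 ≤ lam) (k : ℕ) :
    |1 - gam lam ^ (-(k : ℤ))| ≤ (lam + 2) ^ k * (k * √lam) := by
  have hγ := gam_pos h
  have hsplit : 1 - gam lam ^ (-(k : ℤ)) = -((gam lam)⁻¹ ^ k * (1 - gam lam ^ k)) := by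
    rw [zpow_neg, zpow_natCast, inv_pow]
    field_simp
    ring
  rw [hsplit, abs_neg, abs_mul, abs_of_pos (pow_pos (inv_pos.2 hγ) k)]
  exact mul_le_mul (pow_le_pow_left₀ (inv_nonneg.2 hγ.le) (inv_gam_le h) k)
    (abs_one_sub_gam_pow_le h k) (abs_nonneg _) (by positivity)

lemma abs_one_sub_gam_pow_div_le (h : 0 ≤ lam) (k : ℕ) :
    |(1 - gam lam ^ k) / (lam + 1 - gam lam)| ≤ k := by
  have hγ := gam_pos h
  have hγ₁ := gam_le_one h
  rw [abs_of_nonneg (div_nonneg (sub_nonneg.2 (pow_le_one₀ hγ.le hγ₁)) (by linarith))]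
  apply div_le_of_le_mul₀ (by linarith) (Nat.cast_nonneg k)
  calc 1 - gam lam ^ k ≤ k * (1 - gam lam) := one_sub_pow_le_mul_one_sub (by linarith) k
    _ ≤ k * (lam + 1 - gam lam) := by gcongr; linarith

end gam

theorem resolvent_difference_uniformly_bounded_general (k : ℕ) (C₀ : ℝ) :
    ∃ C : ℝ, ∀ lam : ℝ, lam ∈ Set.Ioo (0 : ℝ) 1 → ∀ c₁ c₂ : ℝ,
      |c₁ - lam ^ (-(1 / 2) : ℝ)| ≤ C₀ → |c₂ - lam ^ (-(1 / 2) : ℝ)| ≤ C₀ →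
      |(1 - gam lam ^ k) / (lam + 1 - gam lam) +
          (c₁ * (1 - gam lam ^ k) + c₂ * (1 - gam lam ^ (-(k : ℤ)))) / 2| ≤ C := by
  refine ⟨k + (k * (C₀ + 1) + 3 ^ k * k * (C₀ + 1)) / 2, ?_⟩
  rintro lam ⟨hlam₀, hlam₁⟩ c₁ c₂ hc₁ hc₂
  have hs : 0 < √lam := sqrt_pos.2 hlam₀
  have hs₁ : √lam ≤ 1 := sqrt_le_one.2 hlam₁.le
  rw [rpow_neg hlam₀.le, ← sqrt_eq_rpow] at hc₁ hc₂
  have h₀ := abs_one_sub_gam_pow_div_le hlam₀.le k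
  have h₁ := abs_mul_le_of_abs_sub_inv_le hs hs₁ hc₁ (abs_one_sub_gam_pow_le hlam₀.le k)
  have h₂ : |c₂ * (1 - gam lam ^ (-(k : ℤ)))| ≤ 3 ^ k * k * (C₀ + 1) := by
    refine abs_mul_le_of_abs_sub_inv_le hs hs₁ hc₂ ?_
    calc |1 - gam lam ^ (-(k : ℤ))| ≤ (lam + 2) ^ k * (k * √lam) :=
          abs_one_sub_gam_zpow_neg_le hlam₀.le k
      _ ≤ 3 ^ k * k * √lam := by rw [← mul_assoc]; gcongr; linarith
  calc _ ≤ |(1 - gam lam ^ k) / (lam + 1 - gam lam)|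
          + |c₁ * (1 - gam lam ^ k) + c₂ * (1 - gam lam ^ (-(k : ℤ)))| / 2 := by
        grw [abs_add_le, abs_div _ (2 : ℝ), abs_two]
    _ ≤ _ := by grw [abs_add_le, h₀, h₁, h₂]

/-- Uniform boundedness of the resolvent difference: for fixed `k ≥ 1` and `C₀ < ∞` there
is `C < ∞` such that for all `λ ∈ (0,1)` and all `c₁, c₂` with `|cᵢ - λ^{-1/2}| ≤ C₀`,
`|(1 - γᵏ)/(λ + 1 - γ) + ½(c₁(1 - γᵏ) + c₂(1 - γ⁻ᵏ))| ≤ C`. -/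
theorem resolvent_difference_uniformly_bounded (k : ℕ) (hk : 1 ≤ k) (C₀ : ℝ) :
    ∃ C : ℝ, ∀ lam : ℝ, lam ∈ Set.Ioo (0 : ℝ) 1 → ∀ c₁ c₂ : ℝ,
      |c₁ - lam ^ (-(1 / 2) : ℝ)| ≤ C₀ → |c₂ - lam ^ (-(1 / 2) : ℝ)| ≤ C₀ →
      |(1 - gam lam ^ k) / (lam + 1 - gam lam) +
          (c₁ * (1 - gam lam ^ k) + c₂ * (1 - gam lam ^ (-(k : ℤ)))) / 2| ≤ C :=
  resolvent_difference_uniformly_bounded_general k C₀
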